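/- Let {(W_i, ω_i)}_{i∈I} be a fusion frame for H with bounds A, B, and let K ∈ B(H) have closed range with pseudo-inverse K†, such that W_i ⊆ R(K†) for all i. Then {(KW_i, ω_i)}_{i∈I} is a K-fusion frame for H (where KW_i denotes the closure of K(W_i) if necessary). -/

import Mathlib

/-! The adjoint transports the fusion frame inequalities: for `w ∈ Wᵢ` one has
`⟪K w, f⟫ = ⟪w, π_{Wᵢ} K* f⟫`, so `‖π_{Wᵢ} K* f‖ ≤ ‖K*‖ ‖π_{KWᵢ} f‖`, and, since `K†` is a left
inverse of `K` on `R(K†) ⊇ Wᵢ`, also `‖π_{KWᵢ} f‖ ≤ ‖K†‖ ‖π_{Wᵢ} K* f‖`. Applying the fusion frame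
bounds to `K* f` then gives the `K`-fusion frame bounds. -/

open scoped InnerProductSpace
open ContinuousLinearMap (adjoint)

noncomputable def proj {H : Type*} [NormedAddCommGroup H] [InnerProductSpace ℂ H]
    (U : Submodule ℂ H) [U.HasOrthogonalProjection] : H →L[ℂ] H :=
  U.subtypeL.comp U.orthogonalProjectionOnto

variable {H : Type*} [NormedAddCommGroup H] [InnerProductSpace ℂ H] [CompleteSpace H]
  [TopologicalSpace.SeparableSpace H]

lemma proj_eq_starProjection {E : Type*} [NormedAddCommGroup E] [InnerProductSpace ℂ E]
    (U : Submodule ℂ E) [U.HasOrthogonalProjection] : proj U = U.starProjection := rfl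

lemma norm_le_opNorm_mul_of_mem_range {𝕜 E F : Type*} [NontriviallyNormedField 𝕜]
    [SeminormedAddCommGroup E] [NormedSpace 𝕜 E] [SeminormedAddCommGroup F] [NormedSpace 𝕜 F]
    {K : E →L[𝕜] F} {Kd : F →L[𝕜] E}
    (h : Kd ∘L K ∘L Kd = Kd) {w : E} (hw : w ∈ LinearMap.range (Kd : F →ₗ[𝕜] E)) :
    ‖w‖ ≤ ‖Kd‖ * ‖K w‖ := by
  obtain ⟨x, rfl⟩ := hw
  have hfix : Kd (K (Kd x)) = Kd x := congr($h x)
  calc ‖Kd x‖ = ‖Kd (K (Kd x))‖ := by rw [hfix]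
    _ ≤ ‖Kd‖ * ‖K (Kd x)‖ := Kd.le_opNorm _

section Projections

variable {𝕜 E F : Type*} [RCLike 𝕜] [NormedAddCommGroup E] [InnerProductSpace 𝕜 E]
  [NormedAddCommGroup F] [InnerProductSpace 𝕜 F]

lemma norm_starProjection_le_of_forall_norm_inner_le {V : Submodule 𝕜 F}
    [V.HasOrthogonalProjection] {f : F} {c : ℝ} (hc : 0 ≤ c)
    (h : ∀ u ∈ V, ‖⟪u, f⟫_𝕜‖ ≤ c * ‖u‖) : ‖V.starProjection f‖ ≤ c := by
  set p := V.starProjection f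
  have hp : ‖p‖ ^ 2 ≤ c * ‖p‖ :=
    calc ‖p‖ ^ 2 = RCLike.re ⟪p, f⟫_𝕜 := (V.re_inner_starProjection_eq_normSq f).symm
      _ ≤ ‖⟪p, f⟫_𝕜‖ := RCLike.re_le_norm _
      _ ≤ c * ‖p‖ := h p (V.starProjection_apply_mem f)
  nlinarith [norm_nonneg p]

lemma forall_norm_inner_le_of_mem_topologicalClosure (S : Submodule 𝕜 F) (f : F) {c : ℝ}
    (h : ∀ u ∈ S, ‖⟪u, f⟫_𝕜‖ ≤ c * ‖u‖) :
    ∀ u ∈ S.topologicalClosure, ‖⟪u, f⟫_𝕜‖ ≤ c * ‖u‖ := by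
  have hclosed : IsClosed {u : F | ‖⟪u, f⟫_𝕜‖ ≤ c * ‖u‖} :=
    isClosed_le (continuous_id.inner continuous_const).norm (continuous_const.mul continuous_norm)
  intro u hu
  rw [← SetLike.mem_coe, S.topologicalClosure_coe] at hu
  exact closure_minimal h hclosed hu

variable [CompleteSpace E] [CompleteSpace F]

lemma inner_apply_eq_inner_starProjection_adjoint (K : E →L[𝕜] F) (W : Submodule 𝕜 E)
    [W.HasOrthogonalProjection] {w : E} (hw : w ∈ W) (f : F) :
    ⟪K w, f⟫_𝕜 = ⟪w, W.starProjection (adjoint K f)⟫_𝕜 := by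
  rw [← W.inner_starProjection_left_eq_right, W.starProjection_eq_self_iff.mpr hw,
    ContinuousLinearMap.adjoint_inner_right]

lemma norm_starProjection_adjoint_le (K : E →L[𝕜] F) {W : Submodule 𝕜 E} {V : Submodule 𝕜 F}
    [W.HasOrthogonalProjection] [V.HasOrthogonalProjection] (hWV : W.map (K : E →ₗ[𝕜] F) ≤ V)
    (f : F) :
    ‖W.starProjection (adjoint K f)‖ ≤ ‖adjoint K‖ * ‖V.starProjection f‖ := by
  have hperp : adjoint K (f - V.starProjection f) ∈ Wᗮ := by
    intro w hw
    rw [ContinuousLinearMap.adjoint_inner_right]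
    exact V.sub_starProjection_mem_orthogonal f _ (hWV (Submodule.mem_map_of_mem hw))
  have heq :
      W.starProjection (adjoint K f) = W.starProjection (adjoint K (V.starProjection f)) := by
    rw [← sub_eq_zero, ← map_sub, ← map_sub]
    exact W.starProjection_apply_eq_zero_iff.mpr hperp
  calc ‖W.starProjection (adjoint K f)‖
      = ‖W.starProjection (adjoint K (V.starProjection f))‖ := by rw [heq]
    _ ≤ ‖adjoint K (V.starProjection f)‖ := W.norm_starProjection_apply_le _
    _ ≤ ‖adjoint K‖ * ‖V.starProjection f‖ := (adjoint K).le_opNorm _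

lemma norm_starProjection_le_opNorm_mul_adjoint {K : E →L[𝕜] F} {Kd : F →L[𝕜] E}
    (h : Kd ∘L K ∘L Kd = Kd) {W : Submodule 𝕜 E} {V : Submodule 𝕜 F}
    [W.HasOrthogonalProjection] [V.HasOrthogonalProjection]
    (hW : W ≤ LinearMap.range (Kd : F →ₗ[𝕜] E))
    (hV : V ≤ (W.map (K : E →ₗ[𝕜] F)).topologicalClosure)
    (f : F) : ‖V.starProjection f‖ ≤ ‖Kd‖ * ‖W.starProjection (adjoint K f)‖ := by
  refine norm_starProjection_le_of_forall_norm_inner_le (by positivity) fun u hu => ?_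
  refine forall_norm_inner_le_of_mem_topologicalClosure _ f ?_ u (hV hu)
  rintro _ ⟨w, hw, rfl⟩
  calc ‖⟪K w, f⟫_𝕜‖ = ‖⟪w, W.starProjection (adjoint K f)⟫_𝕜‖ := by
        rw [inner_apply_eq_inner_starProjection_adjoint K W hw]
    _ ≤ ‖w‖ * ‖W.starProjection (adjoint K f)‖ := norm_inner_le_norm _ _
    _ ≤ ‖Kd‖ * ‖K w‖ * ‖W.starProjection (adjoint K f)‖ := by
        gcongr; exact norm_le_opNorm_mul_of_mem_range h (hW hw)
    _ = ‖Kd‖ * ‖W.starProjection (adjoint K f)‖ * ‖K w‖ := by ring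

end Projections

section WeightedSums

lemma mul_sq_le_sq_mul_of_le_mul {a b c : ℝ} (ha : 0 ≤ a) (h : a ≤ c * b) (w : ℝ) :
    w ^ 2 * a ^ 2 ≤ c ^ 2 * (w ^ 2 * b ^ 2) := by
  have : a ^ 2 ≤ (c * b) ^ 2 := pow_le_pow_left₀ ha h 2
  nlinarith [sq_nonneg w]

variable {ι : Type*} {ω x y : ι → ℝ} {c : ℝ}

lemma summable_mul_sq_of_le_mul (hx : ∀ i, 0 ≤ x i) (h : ∀ i, x i ≤ c * y i)
    (hy : Summable fun i => ω i ^ 2 * y i ^ 2) : Summable fun i => ω i ^ 2 * x i ^ 2 :=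
  .of_nonneg_of_le (fun i => by positivity)
    (fun i => mul_sq_le_sq_mul_of_le_mul (hx i) (h i) (ω i)) (hy.mul_left _)

lemma tsum_mul_sq_le_of_le_mul (hx : ∀ i, 0 ≤ x i) (h : ∀ i, x i ≤ c * y i)
    (hy : Summable fun i => ω i ^ 2 * y i ^ 2) :
    ∑' i, ω i ^ 2 * x i ^ 2 ≤ c ^ 2 * ∑' i, ω i ^ 2 * y i ^ 2 := by
  rw [← tsum_mul_left]
  exact (summable_mul_sq_of_le_mul hx h hy).tsum_le_tsum
    (fun i => mul_sq_le_sq_mul_of_le_mul (hx i) (h i) (ω i)) (hy.mul_left _)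

end WeightedSums

-- `∑'` of a non-summable family is `0`, so a positive lower bound forces summability.
lemma summable_of_lower_frame_bound {𝕜 E ι : Type*} [RCLike 𝕜] [NormedAddCommGroup E]
    [InnerProductSpace 𝕜 E] {W : ι → Submodule 𝕜 E} [∀ i, (W i).HasOrthogonalProjection]
    {ω : ι → ℝ} {A : ℝ} (hA : 0 < A) {g : E}
    (h : A * ‖g‖ ^ 2 ≤ ∑' i, ω i ^ 2 * ‖(W i).starProjection g‖ ^ 2) :
    Summable fun i => ω i ^ 2 * ‖(W i).starProjection g‖ ^ 2 := by
  by_contra hns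
  rw [tsum_eq_zero_of_not_summable hns] at h
  have hg : g = 0 := by
    have : ‖g‖ ^ 2 ≤ 0 := by nlinarith
    simpa using this
  exact hns (by simp [hg])

theorem image_fusion_frame_is_K_fusion_frame_general {ι : Type*}
    (K Kd : H →L[ℂ] H)
    (h2 : Kd ∘L K ∘L Kd = Kd)
    (W KW : ι → Submodule ℂ H) [∀ i, CompleteSpace (W i)] [∀ i, CompleteSpace (KW i)]
    (ω : ι → ℝ) (A B : ℝ) (hA : 0 < A) (hB : 0 < B)
    (hfusion : ∀ f : H, A * ‖f‖ ^ 2 ≤ ∑' i, ω i ^ 2 * ‖proj (W i) f‖ ^ 2 ∧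
      ∑' i, ω i ^ 2 * ‖proj (W i) f‖ ^ 2 ≤ B * ‖f‖ ^ 2)
    (hsub : ∀ i, W i ≤ LinearMap.range (Kd : H →ₗ[ℂ] H))
    (hKW : ∀ i, KW i = ((W i).map (K : H →ₗ[ℂ] H)).topologicalClosure) :
    ∃ A' B' : ℝ, 0 < A' ∧ 0 < B' ∧ ∀ f : H,
      A' * ‖adjoint K f‖ ^ 2 ≤ ∑' i, ω i ^ 2 * ‖proj (KW i) f‖ ^ 2 ∧
      ∑' i, ω i ^ 2 * ‖proj (KW i) f‖ ^ 2 ≤ B' * ‖f‖ ^ 2 := by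
  simp only [proj_eq_starProjection] at hfusion ⊢
  refine ⟨A / (‖adjoint K‖ ^ 2 + 1), B * (‖Kd‖ ^ 2 * ‖adjoint K‖ ^ 2 + 1), by positivity,
    by positivity, fun f => ?_⟩
  obtain ⟨hlower, hupper⟩ := hfusion (adjoint K f)
  have hW := summable_of_lower_frame_bound hA hlower
  have hmaps i : (W i).map (K : H →ₗ[ℂ] H) ≤ KW i := hKW i ▸ Submodule.le_topologicalClosure _
  have hWKW i := norm_starProjection_adjoint_le K (hmaps i) f
  have hKWW i := norm_starProjection_le_opNorm_mul_adjoint h2 (hsub i) (hKW i).le f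
  have hKW_le := tsum_mul_sq_le_of_le_mul (fun _ => norm_nonneg _) hKWW hW
  have hW_le := tsum_mul_sq_le_of_le_mul (fun _ => norm_nonneg _) hWKW
    (summable_mul_sq_of_le_mul (fun _ => norm_nonneg _) hKWW hW)
  have hKf : ‖adjoint K f‖ ^ 2 ≤ ‖adjoint K‖ ^ 2 * ‖f‖ ^ 2 := by
    rw [← mul_pow]; gcongr; exact (adjoint K).le_opNorm f
  have hKW_nonneg : 0 ≤ ∑' i, ω i ^ 2 * ‖(KW i).starProjection f‖ ^ 2 :=
    tsum_nonneg fun _ => by positivity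
  constructor
  · rw [div_mul_eq_mul_div, div_le_iff₀ (by positivity)]
    linarith
  · calc ∑' i, ω i ^ 2 * ‖(KW i).starProjection f‖ ^ 2
        ≤ ‖Kd‖ ^ 2 * ∑' i, ω i ^ 2 * ‖(W i).starProjection (adjoint K f)‖ ^ 2 := hKW_le
      _ ≤ ‖Kd‖ ^ 2 * (B * ‖adjoint K f‖ ^ 2) := by gcongr
      _ ≤ ‖Kd‖ ^ 2 * (B * (‖adjoint K‖ ^ 2 * ‖f‖ ^ 2)) := by gcongr
      _ ≤ B * (‖Kd‖ ^ 2 * ‖adjoint K‖ ^ 2 + 1) * ‖f‖ ^ 2 := by nlinarith [sq_nonneg ‖f‖]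

theorem image_fusion_frame_is_K_fusion_frame {ι : Type*} [Countable ι]
    (K Kd : H →L[ℂ] H) (hKclosed : IsClosed (LinearMap.range (K : H →ₗ[ℂ] H) : Set H))
    (h1 : K ∘L Kd ∘L K = K) (h2 : Kd ∘L K ∘L Kd = Kd)
    (h3 : adjoint (K ∘L Kd) = K ∘L Kd) (h4 : adjoint (Kd ∘L K) = Kd ∘L K)
    (W KW : ι → Submodule ℂ H) [∀ i, CompleteSpace (W i)] [∀ i, CompleteSpace (KW i)]
    (ω : ι → ℝ) (hω : ∀ i, 0 < ω i) (A B : ℝ) (hA : 0 < A) (hB : 0 < B)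
    (hfusion : ∀ f : H, A * ‖f‖ ^ 2 ≤ ∑' i, ω i ^ 2 * ‖proj (W i) f‖ ^ 2 ∧
      ∑' i, ω i ^ 2 * ‖proj (W i) f‖ ^ 2 ≤ B * ‖f‖ ^ 2)
    (hsub : ∀ i, W i ≤ LinearMap.range (Kd : H →ₗ[ℂ] H))
    (hKW : ∀ i, KW i = ((W i).map (K : H →ₗ[ℂ] H)).topologicalClosure) :
    ∃ A' B' : ℝ, 0 < A' ∧ 0 < B' ∧ ∀ f : H,
      A' * ‖adjoint K f‖ ^ 2 ≤ ∑' i, ω i ^ 2 * ‖proj (KW i) f‖ ^ 2 ∧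
      ∑' i, ω i ^ 2 * ‖proj (KW i) f‖ ^ 2 ≤ B' * ‖f‖ ^ 2 :=
  image_fusion_frame_is_K_fusion_frame_general K Kd h2 W KW ω A B hA hB hfusion hsub hKW
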